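/- arXiv:1910.04278 — 2 statements merged into one kernel-verified Lean document; each statement's English description precedes it below -/
import Mathlib

section
/- Let E be a type, let c : E → ℝ, let H be a finite subset of E, and let c_H be the residual weight that equals −c on H and c off H. Let B be a collection of finite subsets of E that contains the empty set and is closed under symmetric difference. Then a set H' with H ∆ H' ∈ B satisfies ∑_{e∈H'} c(e) ≤ ∑_{e∈H''} c(e) for every H'' with H ∆ H'' ∈ B, if and only if the set D := H ∆ H' satisfies ∑_{e∈D} c_H(e) ≤ ∑_{e∈D'} c_H(e) for every D' ∈ B. -/
private lemma symmDiff_sum_key {E : Type*} [DecidableEq E] (c : E → ℝ) (H D : Finset E) :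
    ∑ e ∈ symmDiff H D, c e =
      ∑ e ∈ H, c e + ∑ e ∈ D, (if e ∈ H then -c e else c e) := by
  classical
  have hd : Disjoint (H \ D) (D \ H) := by
    simp [Finset.disjoint_left, Finset.mem_sdiff]
    tauto
  have h1 : ∑ e ∈ symmDiff H D, c e = ∑ e ∈ H \ D, c e + ∑ e ∈ D \ H, c e := by
    rw [symmDiff_def]
    exact Finset.sum_union hd
  have h2 : ∑ e ∈ H ∩ D, c e + ∑ e ∈ H \ D, c e = ∑ e ∈ H, c e :=
    Finset.sum_inter_add_sum_sdiff H D c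
  have h3 : ∑ e ∈ D, (if e ∈ H then -c e else c e)
      = ∑ e ∈ D.filter (· ∈ H), (fun e => -c e) e + ∑ e ∈ D.filter (fun e => ¬ e ∈ H), c e := by
    rw [Finset.sum_ite]
  have h4 : D.filter (· ∈ H) = D ∩ H := by
    ext x; simp [Finset.mem_inter]
  have h5 : D.filter (fun e => ¬ e ∈ H) = D \ H := by
    ext x; simp [Finset.mem_sdiff]
  have h6 : ∑ e ∈ D ∩ H, (fun e => -c e) e = -∑ e ∈ D ∩ H, c e := by
    simp
  have h7 : D ∩ H = H ∩ D := Finset.inter_comm D H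
  rw [h1, h3, h4, h5, h6, h7]
  linarith

/-- Let `c : E → ℝ`, let `H` be a finite subset of `E`, and let `c_H` be the residual
weight that equals `-c` on `H` and `c` off `H`.  Let `B` be a collection of finite subsets
of `E` containing `∅` and closed under symmetric difference.  Then a set `H'` with
`H ∆ H' ∈ B` minimizes `∑ c` among all `H''` with `H ∆ H'' ∈ B` if and only if
`D := H ∆ H'` minimizes `∑ c_H` among all members of `B`. -/
theorem minimizes_iff_residual_minimizes
    {E : Type*} [DecidableEq E] (c : E → ℝ) (H : Finset E)
    (B : Set (Finset E)) (hempty : (∅ : Finset E) ∈ B)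
    (hclosed : ∀ D₁ ∈ B, ∀ D₂ ∈ B, symmDiff D₁ D₂ ∈ B)
    (H' : Finset E) (hH' : symmDiff H H' ∈ B) :
    (∀ H'' : Finset E, symmDiff H H'' ∈ B →
        ∑ e ∈ H', c e ≤ ∑ e ∈ H'', c e) ↔
      (∀ D' ∈ B,
        ∑ e ∈ symmDiff H H', (if e ∈ H then -c e else c e) ≤
          ∑ e ∈ D', (if e ∈ H then -c e else c e)) := by
  have keyH' : ∑ e ∈ symmDiff H (symmDiff H H'), c e = ∑ e ∈ H', c e := by
    rw [symmDiff_symmDiff_cancel_left]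
  constructor
  · intro hmin D' hD'
    have h1 := hmin (symmDiff H D') (by rwa [symmDiff_symmDiff_cancel_left])
    have e1 := symmDiff_sum_key c H (symmDiff H H')
    have e2 := symmDiff_sum_key c H D'
    rw [keyH'] at e1
    linarith
  · intro hmin H'' hH''
    have h1 := hmin (symmDiff H H'') hH''
    have e1 := symmDiff_sum_key c H (symmDiff H H')
    have e2 := symmDiff_sum_key c H (symmDiff H H'')
    rw [keyH'] at e1
    rw [symmDiff_symmDiff_cancel_left] at e2
    linarith
end

section
/- Let p be a walk in G from u to v whose weight is less than or equal to the weight of every walk in G from u to v. Then for every h ∈ A, the unique lift of p starting at (u,h) in the Z₂-homology cover Ḡ has weight less than or equal to the weight of every walk in Ḡ from (u,h) to (v, h + sig(p)). In other words, every lift of a shortest path in G is a shortest path in Ḡ. -/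
/-- The `Z₂`-homology cover of `G`: the simple graph on `V × (Fin β → ZMod 2)` in which
`(u, h)` and `(v, h')` are adjacent iff `u` and `v` are adjacent in `G` and
`h' = h + σ u v`. -/
def HomologyCover (β : ℕ) {V : Type*} (G : SimpleGraph V)
    (σ : V → V → (Fin β → ZMod 2)) (hσ : ∀ u v, σ u v = σ v u) :
    SimpleGraph (V × (Fin β → ZMod 2)) where
  Adj x y := G.Adj x.1 y.1 ∧ y.2 = x.2 + σ x.1 y.1
  symm := ⟨by
    rintro ⟨u, h⟩ ⟨v, h'⟩ ⟨hadj, heq⟩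
    refine ⟨hadj.symm, ?_⟩
    simp only at heq ⊢
    subst heq
    rw [hσ v u]
    funext i
    simp only [Pi.add_apply]
    rw [add_assoc, CharTwo.add_self_eq_zero, add_zero]⟩
  loopless := ⟨fun x hx => G.loopless.1 x.1 hx.1⟩

/-- The covering projection `π (v, h) = v`, as a graph homomorphism from the
`Z₂`-homology cover of `G` to `G`. -/
def homologyProj (β : ℕ) {V : Type*} (G : SimpleGraph V)
    (σ : V → V → (Fin β → ZMod 2)) (hσ : ∀ u v, σ u v = σ v u) :
    HomologyCover β G σ hσ →g G where
  toFun := Prod.fst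
  map_rel' := fun hadj => hadj.1

/-- The signature of a walk: the sum of `σ x y` over the darts `(x, y)` traversed by the
walk, with multiplicity. -/
def walkSig {β : ℕ} {V : Type*} {G : SimpleGraph V} (σ : V → V → (Fin β → ZMod 2))
    {u v : V} (p : G.Walk u v) : Fin β → ZMod 2 :=
  (p.darts.map fun d => σ d.toProd.1 d.toProd.2).sum

/-- The weight of a walk: the sum of `w x y` over the darts `(x, y)` traversed by the
walk, with multiplicity. -/
def walkWeight {V : Type*} {G : SimpleGraph V} (w : V → V → ℝ)
    {u v : V} (p : G.Walk u v) : ℝ :=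
  (p.darts.map fun d => w d.toProd.1 d.toProd.2).sum

theorem walkWeight_map {V V' : Type*} {G : SimpleGraph V} {G' : SimpleGraph V'} (f : G →g G')
    (w : V' → V' → ℝ) {u v : V} (p : G.Walk u v) :
    walkWeight w (p.map f) = walkWeight (fun x y => w (f x) (f y)) p := by
  simp only [walkWeight, SimpleGraph.Walk.darts_map, List.map_map]
  rfl

theorem lift_of_shortest_is_shortest_general (β : ℕ) {V : Type*} (G : SimpleGraph V)
    (σ : V → V → (Fin β → ZMod 2)) (hσ : ∀ u v, σ u v = σ v u)
    (w : V → V → ℝ)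
    (u v : V) (p : G.Walk u v)
    (hp : ∀ p' : G.Walk u v, walkWeight w p ≤ walkWeight w p')
    (h : Fin β → ZMod 2)
    (q : (HomologyCover β G σ hσ).Walk (u, h) (v, h + walkSig σ p))
    (hq : q.map (homologyProj β G σ hσ) = p) :
    ∀ q' : (HomologyCover β G σ hσ).Walk (u, h) (v, h + walkSig σ p),
      walkWeight (fun x y => w x.1 y.1) q ≤ walkWeight (fun x y => w x.1 y.1) q' := by
  intro q'
  have weight_eq_proj : ∀ r : (HomologyCover β G σ hσ).Walk (u, h) (v, h + walkSig σ p),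
      walkWeight (fun x y => w x.1 y.1) r = walkWeight w (r.map (homologyProj β G σ hσ)) :=
    fun r => (walkWeight_map (homologyProj β G σ hσ) w r).symm
  rw [weight_eq_proj q, weight_eq_proj q', hq]
  exact hp _

/-- Let `p` be a walk in `G` from `u` to `v` whose weight is at most the weight of every
walk in `G` from `u` to `v`.  Then for every `h`, the lift of `p` starting at `(u, h)`
(which ends at `(v, h + sig p)`) has weight at most the weight of every walk in the
`Z₂`-homology cover from `(u, h)` to `(v, h + sig p)`: every lift of a shortest path is a
shortest path in the cover. -/
theorem lift_of_shortest_is_shortest (β : ℕ) {V : Type*} (G : SimpleGraph V)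
    (σ : V → V → (Fin β → ZMod 2)) (hσ : ∀ u v, σ u v = σ v u)
    (w : V → V → ℝ) (hw : ∀ x y, w x y = w y x)
    (u v : V) (p : G.Walk u v)
    (hp : ∀ p' : G.Walk u v, walkWeight w p ≤ walkWeight w p')
    (h : Fin β → ZMod 2)
    (q : (HomologyCover β G σ hσ).Walk (u, h) (v, h + walkSig σ p))
    (hq : q.map (homologyProj β G σ hσ) = p) :
    ∀ q' : (HomologyCover β G σ hσ).Walk (u, h) (v, h + walkSig σ p),
      walkWeight (fun x y => w x.1 y.1) q ≤ walkWeight (fun x y => w x.1 y.1) q' :=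
  lift_of_shortest_is_shortest_general β G σ hσ w u v p hp h q hq
end
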